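/- Let t be a smooth function on U ⊂ ℝ⁵ implicitly defined by F(x⁰ + x¹x⁴ + 3tx²x⁴ − t³(x⁴)², x¹ + t³x⁴, x² − t²x⁴, x³ + tx⁴, t) = 0, where F is a smooth function of five variables and the implicit function theorem applies (the total derivative of the left side with respect to t is nonzero). Then t satisfies the PDE (x¹+3tx²)t_{x⁰} + t³t_{x¹} − t²t_{x²} + t·t_{x³} − t_{x⁴} = 0. (Kerr theorem for contact Engel structures, one direction.) -/

import Mathlib

/-!
For fixed `τ`, the map `x ↦ PhiK x τ` is constant along the curve `fiberCurve x τ`, whose velocity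
at `x` is the Engel field `V(x, τ) = (x¹ + 3τx², τ³, −τ², τ, −1)`. Differentiating
`F (PhiK x (t x)) = 0` in the direction `V(x, t x)` therefore kills the `x`-derivative of
`G(x, τ) = F (PhiK x τ)` and leaves `∂_τ G · dt(V) = 0`. Since `∂_τ G ≠ 0`, `dt(V) = 0`, and expanding
`dt(V)` in the standard basis is the PDE.
-/

open Filter Topology

/-- The map `(x, τ) ↦ (x⁰ + x¹x⁴ + 3τx²x⁴ − τ³(x⁴)², x¹ + τ³x⁴, x² − τ²x⁴, x³ + τx⁴, τ)`. -/
def PhiK (x : Fin 5 → ℝ) (τ : ℝ) : Fin 5 → ℝ :=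
  ![x 0 + x 1 * x 4 + 3 * τ * x 2 * x 4 - τ ^ 3 * (x 4) ^ 2,
    x 1 + τ ^ 3 * x 4,
    x 2 - τ ^ 2 * x 4,
    x 3 + τ * x 4,
    τ]

section ImplicitDifferentiation

variable {E : Type*} [NormedAddCommGroup E] [NormedSpace ℝ E] {G : E × ℝ → ℝ}

theorem fderiv_apply_prod_fderiv_eq_zero {t : E → ℝ} {x : E} (v : E)
    (hG : DifferentiableAt ℝ G (x, t x)) (ht : DifferentiableAt ℝ t x)
    (h0 : (fun y => G (y, t y)) =ᶠ[𝓝 x] 0) :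
    fderiv ℝ G (x, t x) (v, fderiv ℝ t x v) = 0 := by
  have hcomp : HasFDerivAt (fun y => G (y, t y))
      ((fderiv ℝ G (x, t x)).comp ((ContinuousLinearMap.id ℝ E).prod (fderiv ℝ t x))) x :=
    hG.hasFDerivAt.comp x ((hasFDerivAt_id x).prodMk ht.hasFDerivAt)
  have hzero : fderiv ℝ (fun y => G (y, t y)) x = 0 := by
    rw [h0.fderiv_eq, fderiv_zero, Pi.zero_apply]
  simpa [hcomp.fderiv] using congrArg (· v) hzero

theorem fderiv_apply_zero_one_eq_deriv {x : E} {τ : ℝ} (hG : DifferentiableAt ℝ G (x, τ)) :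
    fderiv ℝ G (x, τ) (0, 1) = deriv (fun σ => G (x, σ)) τ := by
  have h : HasDerivAt (fun σ => G (x, σ)) (fderiv ℝ G (x, τ) (0, 1)) τ :=
    hG.hasFDerivAt.comp_hasDerivAt τ ((hasDerivAt_const τ x).prodMk (hasDerivAt_id τ))
  exact h.deriv.symm

theorem fderiv_apply_mk_zero_eq_zero_of_hasDerivAt {γ : ℝ → E} {v : E} {τ : ℝ}
    (hG : DifferentiableAt ℝ G (γ 0, τ)) (hγ : HasDerivAt γ v 0)
    (hconst : ∀ s, G (γ s, τ) = G (γ 0, τ)) :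
    fderiv ℝ G (γ 0, τ) (v, 0) = 0 := by
  have hcomp : HasDerivAt (fun s => G (γ s, τ)) (fderiv ℝ G (γ 0, τ) (v, 0)) 0 :=
    hG.hasFDerivAt.comp_hasDerivAt 0 (hγ.prodMk (hasDerivAt_const 0 τ))
  rw [funext hconst] at hcomp
  exact hcomp.unique (hasDerivAt_const 0 _)

theorem fderiv_apply_eq_zero_of_implicit {t : E → ℝ} {x v : E} {γ : ℝ → E}
    (hG : DifferentiableAt ℝ G (x, t x)) (ht : DifferentiableAt ℝ t x)
    (h0 : (fun y => G (y, t y)) =ᶠ[𝓝 x] 0) (hγ : HasDerivAt γ v 0) (hγ0 : γ 0 = x)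
    (hconst : ∀ s, G (γ s, t x) = G (x, t x)) (hτ : deriv (fun σ => G (x, σ)) (t x) ≠ 0) :
    fderiv ℝ t x v = 0 := by
  subst hγ0
  have h := fderiv_apply_prod_fderiv_eq_zero v hG ht h0
  rw [show (v, fderiv ℝ t (γ 0) v) = (v, 0) + fderiv ℝ t (γ 0) v • ((0 : E), (1 : ℝ)) by simp,
    map_add, map_smul, fderiv_apply_mk_zero_eq_zero_of_hasDerivAt hG hγ hconst,
    fderiv_apply_zero_one_eq_deriv hG, zero_add, smul_eq_mul] at h
  exact (mul_eq_zero.1 h).resolve_right hτ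

end ImplicitDifferentiation

def engelField (x : Fin 5 → ℝ) (τ : ℝ) : Fin 5 → ℝ :=
  ![x 1 + 3 * τ * x 2, τ ^ 3, -τ ^ 2, τ, -1]

def fiberCurve (x : Fin 5 → ℝ) (τ s : ℝ) : Fin 5 → ℝ :=
  ![x 0 + s * (x 1 + 3 * τ * x 2) - τ ^ 3 * s ^ 2, x 1 + s * τ ^ 3, x 2 - s * τ ^ 2, x 3 + s * τ,
    x 4 - s]

theorem fiberCurve_zero (x : Fin 5 → ℝ) (τ : ℝ) : fiberCurve x τ 0 = x := by
  ext i
  fin_cases i <;> simp [fiberCurve]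

theorem PhiK_fiberCurve (x : Fin 5 → ℝ) (τ s : ℝ) : PhiK (fiberCurve x τ s) τ = PhiK x τ := by
  ext i
  fin_cases i <;> simp [PhiK, fiberCurve] <;> ring

theorem hasDerivAt_fiberCurve (x : Fin 5 → ℝ) (τ : ℝ) :
    HasDerivAt (fiberCurve x τ) (engelField x τ) 0 := by
  refine hasDerivAt_pi.2 fun i => ?_
  fin_cases i <;> simp only [fiberCurve, engelField, Fin.isValue, Fin.zero_eta, Fin.mk_one,
    Fin.reduceFinMk, Matrix.cons_val_zero, Matrix.cons_val_one, Matrix.cons_val]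
  · convert ((hasDerivAt_mul_const _).const_add (x 0)).fun_sub
      ((hasDerivAt_pow 2 (0 : ℝ)).const_mul (τ ^ 3)) using 1
    simp
  · exact (hasDerivAt_mul_const _).const_add (x 1)
  · exact (hasDerivAt_mul_const _).const_sub (x 2)
  · exact (hasDerivAt_mul_const _).const_add (x 3)
  · exact (hasDerivAt_id' 0).const_sub (x 4)

theorem differentiable_PhiK_uncurry :
    Differentiable ℝ (fun p : (Fin 5 → ℝ) × ℝ => PhiK p.1 p.2) := by
  refine differentiable_pi.2 fun i => ?_
  fin_cases i <;> simp [PhiK] <;> fun_prop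

theorem apply_engelField (L : (Fin 5 → ℝ) →L[ℝ] ℝ) (x : Fin 5 → ℝ) (τ : ℝ) :
    L (engelField x τ) = (x 1 + 3 * τ * x 2) * L (Pi.single 0 1) + τ ^ 3 * L (Pi.single 1 1) -
      τ ^ 2 * L (Pi.single 2 1) + τ * L (Pi.single 3 1) - L (Pi.single 4 1) := by
  have h : engelField x τ = (x 1 + 3 * τ * x 2) • Pi.single 0 1 + τ ^ 3 • Pi.single 1 1 +
      (-τ ^ 2) • Pi.single 2 1 + τ • Pi.single 3 1 + (-1 : ℝ) • Pi.single 4 1 := by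
    ext i
    fin_cases i <;> simp [engelField]
  simp only [h, map_add, map_smul, smul_eq_mul]
  ring

/-- Kerr theorem for contact Engel structures (one direction): a smooth function `t`
implicitly defined by `F(PhiK x (t x)) = 0`, with the implicit function theorem
applicable, satisfies the integrability PDE
`(x¹+3tx²)t_{x⁰} + t³t_{x¹} − t²t_{x²} + t·t_{x³} − t_{x⁴} = 0`. -/
theorem kerr_theorem_for_contact_Engel
    (U : Set (Fin 5 → ℝ)) (hU : IsOpen U)
    (F : (Fin 5 → ℝ) → ℝ) (hF : ContDiff ℝ (⊤ : ℕ∞) F)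
    (t : (Fin 5 → ℝ) → ℝ) (ht : ContDiffOn ℝ (⊤ : ℕ∞) t U)
    (h0 : ∀ x ∈ U, F (PhiK x (t x)) = 0)
    (hnd : ∀ x ∈ U, deriv (fun τ => F (PhiK x τ)) (t x) ≠ 0) :
    ∀ x ∈ U,
      (x 1 + 3 * t x * x 2) * fderiv ℝ t x (Pi.single (0 : Fin 5) 1) +
        (t x) ^ 3 * fderiv ℝ t x (Pi.single (1 : Fin 5) 1) -
        (t x) ^ 2 * fderiv ℝ t x (Pi.single (2 : Fin 5) 1) +
        t x * fderiv ℝ t x (Pi.single (3 : Fin 5) 1) -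
        fderiv ℝ t x (Pi.single (4 : Fin 5) 1) = 0 := by
  intro x hx
  have hFPhi : Differentiable ℝ (fun p : (Fin 5 → ℝ) × ℝ => F (PhiK p.1 p.2)) :=
    (hF.differentiable (by simp)).comp differentiable_PhiK_uncurry
  have hU_nhds : U ∈ 𝓝 x := hU.mem_nhds hx
  rw [← apply_engelField]
  exact fderiv_apply_eq_zero_of_implicit (G := fun p => F (PhiK p.1 p.2)) (hFPhi _)
    ((ht.contDiffAt hU_nhds).differentiableAt (by simp))
    (eventually_of_mem hU_nhds (h0 · ·)) (hasDerivAt_fiberCurve x (t x)) (fiberCurve_zero x _)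
    (fun s => congrArg F (PhiK_fiberCurve x (t x) s)) (hnd x hx)
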